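/- In any strong odd coloring of the wheel W_n = C_n ∨ K_1 with n > 8, each color is used on at most ⌊n/3⌋ vertices of the cycle C_n if ⌊n/3⌋ is odd, and on at most ⌊n/3⌋ − 1 vertices of C_n if ⌊n/3⌋ is even. -/

import Mathlib

open SimpleGraph

/-- A coloring `φ` of the vertices of `G` is a strong odd coloring if it is proper and,
for every vertex `v` and every color `c`, the number of neighbors of `v` colored `c`
is either zero or odd. -/
def IsStrongOddColoring {V α : Type*} (G : SimpleGraph V) (φ : V → α) : Prop :=
  (∀ u v : V, G.Adj u v → φ u ≠ φ v) ∧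
  ∀ (v : V) (c : α),
    {u : V | G.Adj v u ∧ φ u = c}.ncard = 0 ∨ Odd {u : V | G.Adj v u ∧ φ u = c}.ncard

/-- The strong odd chromatic number: the least `k` such that `G` admits a strong odd
coloring with `k` colors. -/
noncomputable def strongOddChromaticNumber {V : Type*} (G : SimpleGraph V) : ℕ :=
  sInf {k : ℕ | ∃ φ : V → Fin k, IsStrongOddColoring G φ}

/-- The join `G ∨ H` of two graphs: disjoint copies of `G` and `H` together with all
edges between them. -/
def joinGraph {V W : Type*} (G : SimpleGraph V) (H : SimpleGraph W) :
    SimpleGraph (V ⊕ W) where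
  Adj x y :=
    match x, y with
    | Sum.inl a, Sum.inl b => G.Adj a b
    | Sum.inl _, Sum.inr _ => True
    | Sum.inr _, Sum.inl _ => True
    | Sum.inr a, Sum.inr b => H.Adj a b
  symm := ⟨by rintro (a | a) (b | b) h <;> first | exact h.symm | trivial⟩
  loopless := ⟨by rintro (a | a) h <;> first | exact G.loopless.irrefl a h | exact H.loopless.irrefl a h⟩

/-- The wheel graph `W_n = C_n ∨ K_1`. -/
def wheelGraph (n : ℕ) : SimpleGraph (Fin n ⊕ Fin 1) :=
  joinGraph (cycleGraph n) (⊥ : SimpleGraph (Fin 1))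

/-- `G_n = C_n ∨ K̄_2`; the two vertices of `K̄_2` are `x_n = Sum.inr 0` and
`y_n = Sum.inr 1`. -/
def cycleJoinTwo (n : ℕ) : SimpleGraph (Fin n ⊕ Fin 2) :=
  joinGraph (cycleGraph n) (⊥ : SimpleGraph (Fin 2))

/-- The one point union of graphs `G` and `H`, obtained by identifying the vertex
`a` of `G` with the vertex `b` of `H` (the identified vertex is `Sum.inl a`). -/
def onePointUnion {V W : Type*} (G : SimpleGraph V) (H : SimpleGraph W) (a : V) (b : W) :
    SimpleGraph (V ⊕ {w : W // w ≠ b}) where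
  Adj x y :=
    match x, y with
    | Sum.inl u, Sum.inl v => G.Adj u v
    | Sum.inl u, Sum.inr v => u = a ∧ H.Adj b v.1
    | Sum.inr v, Sum.inl u => u = a ∧ H.Adj b v.1
    | Sum.inr u, Sum.inr v => H.Adj u.1 v.1
  symm := ⟨by
    rintro (u | u) (v | v) h
    · exact h.symm
    · exact h
    · exact h
    · exact h.symm⟩
  loopless := ⟨by
    rintro (u | u) h
    · exact G.loopless.irrefl u h
    · exact H.loopless.irrefl u.1 h⟩

/-- `I_y(G_m, G_n)`: the one point union of `G_m = C_m ∨ K̄_2` and `G_n = C_n ∨ K̄_2`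
obtained by identifying the vertices `y_m` and `y_n`. -/
def Iy (m n : ℕ) :
    SimpleGraph ((Fin m ⊕ Fin 2) ⊕ {w : Fin n ⊕ Fin 2 // w ≠ Sum.inr 1}) :=
  onePointUnion (cycleJoinTwo m) (cycleJoinTwo n) (Sum.inr 1) (Sum.inr 1)

/-- A planar embedding of a graph `G`: an injective placement of the vertices in the
plane together with, for each edge, an arc (injective path) joining the images of its
endpoints, such that arcs do not pass through images of other vertices and two arcs of
distinct edges meet only in common endpoints. -/
structure PlanarEmbedding {V : Type*} (G : SimpleGraph V) where
  vmap : V → ℝ × ℝ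
  vmap_inj : Function.Injective vmap
  arc : ∀ u v : V, G.Adj u v → Path (vmap u) (vmap v)
  arc_symm : ∀ (u v : V) (h : G.Adj u v), arc v u h.symm = (arc u v h).symm
  arc_inj : ∀ (u v : V) (h : G.Adj u v), Function.Injective (arc u v h)
  arc_vertex : ∀ (u v : V) (h : G.Adj u v) (w : V),
    vmap w ∈ Set.range (arc u v h) → w = u ∨ w = v
  arc_disjoint : ∀ (u v u' v' : V) (h : G.Adj u v) (h' : G.Adj u' v'),
    s(u, v) ≠ s(u', v') →
    Set.range (arc u v h) ∩ Set.range (arc u' v' h') ⊆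
      ({vmap u, vmap v} ∩ {vmap u', vmap v'} : Set (ℝ × ℝ))

/-- A graph is planar if it admits a planar embedding. -/
def IsPlanar {V : Type*} (G : SimpleGraph V) : Prop :=
  Nonempty (PlanarEmbedding G)

/-! The hub is adjacent to the whole rim, so each colour class on the rim has size zero or odd,
and it is empty if the hub has that colour. Otherwise every rim vertex has at most one rim
neighbour of each colour, so two rim vertices of the same colour are at cyclic distance at least
`3`, and a colour class on the rim has at most `⌊n/3⌋` elements; when `⌊n/3⌋` is even, the
oddness of the class lowers this bound by one. -/

open Set in
theorem ncard_mul_le_natCard_of_add_nsmul_notMem {G : Type*} [AddMonoid G]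
    [IsRightCancelAdd G] [Finite G] {S : Set G} {g : G} {r : ℕ}
    (hS : ∀ j ∈ S, ∀ k : ℕ, 0 < k → k < r → j + k • g ∉ S) :
    S.ncard * r ≤ Nat.card G := by
  have key : ∀ j ∈ S, ∀ j' ∈ S, ∀ k k' : ℕ, k ≤ k' → k' < r →
      j + k • g = j' + k' • g → j = j' ∧ k = k' := by
    intro j hj j' hj' k k' hkk' hk' e
    obtain ⟨d, rfl⟩ : ∃ d, k' = d + k := ⟨k' - k, by omega⟩
    have hjd : j = j' + d • g := by
      rw [add_nsmul, ← add_assoc] at e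
      exact add_right_cancel e
    obtain rfl | hd := Nat.eq_zero_or_pos d
    · simpa using hjd
    · exact absurd (hjd ▸ hj) (hS j' hj' d hd (by omega))
  have hinj : InjOn (fun p : G × ℕ => p.1 + p.2 • g) (S ×ˢ Iio r) := by
    rintro ⟨j, k⟩ ⟨hj, hk⟩ ⟨j', k'⟩ ⟨hj', hk'⟩ e
    simp only [mem_Iio] at hk hk' e ⊢
    rcases le_total k k' with h | h
    · obtain ⟨rfl, rfl⟩ := key j hj j' hj' k k' h hk' e
      rfl
    · obtain ⟨rfl, rfl⟩ := key j' hj' j hj k' k h hk e.symm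
      rfl
  calc S.ncard * r = (S ×ˢ Iio r).ncard := by rw [ncard_prod, ncard_Iio_nat]
    _ ≤ (univ : Set G).ncard :=
        ncard_le_ncard_of_injOn _ (fun _ _ => mem_univ _) hinj (toFinite _)
    _ = Nat.card G := ncard_univ G

theorem IsStrongOddColoring.ncard_ne_two {V α : Type*} {G : SimpleGraph V} {φ : V → α}
    (hφ : IsStrongOddColoring G φ) (v : V) (c : α) :
    {u | G.Adj v u ∧ φ u = c}.ncard ≠ 2 := by
  intro h2
  rcases hφ.2 v c with h | h
  · omega
  · rw [h2] at h
    exact (by decide : ¬Odd 2) h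

theorem wheelGraph_hub_adj_rim {n : ℕ} (b : Fin 1) (a : Fin n) :
    (wheelGraph n).Adj (Sum.inr b) (Sum.inl a) :=
  trivial

namespace IsStrongOddColoring

variable {α : Type*} {c : α}

theorem wheel_rim_ncard_colorClass_eq_zero_or_odd {n : ℕ} {φ : Fin n ⊕ Fin 1 → α}
    (hφ : IsStrongOddColoring (wheelGraph n) φ) (c : α) :
    {a | φ (Sum.inl a) = c}.ncard = 0 ∨ Odd {a | φ (Sum.inl a) = c}.ncard := by
  have hhub : {u | (wheelGraph n).Adj (Sum.inr 0) u ∧ φ u = c} =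
      Sum.inl '' {a | φ (Sum.inl a) = c} := by
    ext (a | b)
    · simp [wheelGraph_hub_adj_rim]
    · simp only [Set.mem_ofPred_eq, Set.mem_image, reduceCtorEq, and_false, exists_false,
        iff_false]
      exact fun h => h.1
  rw [← Set.ncard_image_of_injective _ Sum.inl_injective, ← hhub]
  exact hφ.2 (Sum.inr 0) c

theorem wheel_rim_colorClass_eq_empty {n : ℕ} {φ : Fin n ⊕ Fin 1 → α}
    (hφ : IsStrongOddColoring (wheelGraph n) φ) (hhub : φ (Sum.inr 0) = c) :
    {a | φ (Sum.inl a) = c} = ∅ :=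
  Set.eq_empty_of_forall_notMem fun a ha =>
    hφ.1 _ _ (wheelGraph_hub_adj_rim 0 a) (hhub.trans ha.symm)

theorem wheel_rim_add_one_ne {n : ℕ} {φ : Fin (n + 2) ⊕ Fin 1 → α}
    (hφ : IsStrongOddColoring (wheelGraph (n + 2)) φ) {j : Fin (n + 2)}
    (hj : φ (Sum.inl j) = c) : φ (Sum.inl (j + 1)) ≠ c := by
  refine fun hj1 => hφ.1 (Sum.inl (j + 1)) (Sum.inl j) ?_ (hj1.trans hj.symm)
  show (cycleGraph (n + 2)).Adj (j + 1) j
  simp [cycleGraph_adj]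

theorem wheel_rim_add_two_ne {n : ℕ} {φ : Fin (n + 3) ⊕ Fin 1 → α}
    (hφ : IsStrongOddColoring (wheelGraph (n + 3)) φ) (hhub : φ (Sum.inr 0) ≠ c)
    {j : Fin (n + 3)} (hj : φ (Sum.inl j) = c) : φ (Sum.inl (j + 2)) ≠ c := by
  intro hj2
  have hnbrs : {u | (wheelGraph (n + 3)).Adj (Sum.inl (j + 1)) u ∧ φ u = c} =
      {Sum.inl j, Sum.inl (j + 2)} := by
    ext (a | b)
    · have : (wheelGraph (n + 3)).Adj (Sum.inl (j + 1)) (Sum.inl a) ↔ a = j ∨ a = j + 2 := by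
        have h := Set.ext_iff.mp (cycleGraph_neighborSet (v := j + 1)) a
        rwa [add_sub_cancel_right, show j + 1 + 1 = j + 2 by rw [add_assoc]; rfl] at h
      simp only [Set.mem_ofPred_eq, this, Set.mem_insert_iff, Set.mem_singleton_iff,
        Sum.inl.injEq]
      constructor
      · exact And.left
      · rintro (rfl | rfl) <;> simp [hj, hj2]
    · obtain rfl := Subsingleton.elim b 0
      simp [hhub]
  have hne : (Sum.inl j : Fin (n + 3) ⊕ Fin 1) ≠ Sum.inl (j + 2) := by
    simp [Fin.ext_iff, Nat.mod_eq_of_lt (show 2 < n + 3 by omega)]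
  exact hφ.ncard_ne_two (Sum.inl (j + 1)) c (hnbrs ▸ Set.ncard_pair hne)

theorem wheel_rim_ncard_colorClass_mul_three_le {n : ℕ} {φ : Fin (n + 3) ⊕ Fin 1 → α}
    (hφ : IsStrongOddColoring (wheelGraph (n + 3)) φ) (c : α) :
    {a | φ (Sum.inl a) = c}.ncard * 3 ≤ n + 3 := by
  by_cases hhub : φ (Sum.inr 0) = c
  · simp [hφ.wheel_rim_colorClass_eq_empty hhub]
  · have := ncard_mul_le_natCard_of_add_nsmul_notMem (S := {a | φ (Sum.inl a) = c})
      (g := (1 : Fin (n + 3))) (r := 3) fun j hj k hk0 hk3 => by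
        interval_cases k
        · rw [one_nsmul]
          exact hφ.wheel_rim_add_one_ne hj
        · rw [show (2 : ℕ) • (1 : Fin (n + 3)) = 2 from rfl]
          exact hφ.wheel_rim_add_two_ne hhub hj
    simpa using this

end IsStrongOddColoring

/-- In any strong odd coloring of the wheel `W_n = C_n ∨ K_1` with `n > 8`, each color
is used on at most `⌊n/3⌋` vertices of the cycle `C_n` if `⌊n/3⌋` is odd, and on at
most `⌊n/3⌋ - 1` vertices of `C_n` if `⌊n/3⌋` is even. -/
theorem stmt_7 (n : ℕ) (hn : 8 < n) {α : Type*} (φ : Fin n ⊕ Fin 1 → α)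
    (hφ : IsStrongOddColoring (wheelGraph n) φ) (c : α) :
    (Odd (n / 3) → {u : Fin n | φ (Sum.inl u) = c}.ncard ≤ n / 3) ∧
    (Even (n / 3) → {u : Fin n | φ (Sum.inl u) = c}.ncard ≤ n / 3 - 1) := by
  obtain ⟨m, rfl⟩ : ∃ m, n = m + 3 := ⟨n - 3, by omega⟩
  have hle := hφ.wheel_rim_ncard_colorClass_mul_three_le c
  refine ⟨fun _ => by omega, fun heven => ?_⟩
  rcases hφ.wheel_rim_ncard_colorClass_eq_zero_or_odd c with h0 | hodd
  · omega
  · have : {u : Fin (m + 3) | φ (Sum.inl u) = c}.ncard ≠ (m + 3) / 3 := fun h =>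
      Nat.not_even_iff_odd.mpr hodd (h ▸ heven)
    omega
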